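/- arXiv:2502.04380 — 3 statements merged into one kernel-verified Lean document; each statement's English description precedes it below -/
import Mathlib

section
/- Let 𝒳 be a finite type and K a positive integer, and let p, q : 𝒳 × Fin K → ℝ be joint distributions (nonnegative, summing to 1) with p(x) := Σ_k p(x,k) > 0 for every x and p(c=k) := Σ_x p(x,k) > 0 and q(c=k) := Σ_x q(x,k) > 0 for every k, satisfying the Shared Support condition p(x,k)/p(c=k) = q(x,k)/q(c=k) for all x, k. Suppose the domain classifier is deterministic: there is a map k* : 𝒳 → Fin K with p(c=k*(x)|x) = 1 for every x. Then the importance weight reduces to q(x)/p(x) = λ_{k*(x)} for every x, where λ_k := q(c=k)/p(c=k) and p(c=k|x) := p(x,k)/p(x). -/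
/-!
A deterministic classifier puts all of `p(x, ·)` on `k*(x)`, so `p(x, k) = 0` for `k ≠ k*(x)`.
Shared Support transports these zeros to `q(x, ·)`, so both marginals at `x` collapse to their
`k*(x)` entries, and Shared Support at `k*(x)` rearranges to
`q(x, k*) / p(x, k*) = q(c = k*) / p(c = k*)`.
-/

open Finset

theorem Finset.apply_eq_zero_of_apply_eq_sum {ι M : Type*} [Fintype ι] [AddCommMonoid M]
    [PartialOrder M] [IsOrderedCancelAddMonoid M] {f : ι → M} (hf : ∀ i, 0 ≤ f i) {i j : ι}
    (h : f i = ∑ k, f k) (hj : j ≠ i) : f j = 0 := by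
  classical
  have hrest : ∑ k ∈ univ.erase i, f k = 0 := by
    have := add_sum_erase univ f (mem_univ i)
    rwa [← h, add_eq_left] at this
  exact (sum_eq_zero_iff_of_nonneg fun k _ => hf k).mp hrest j (mem_erase.mpr ⟨hj, mem_univ j⟩)

theorem div_eq_div_of_div_eq_div_of_ne_zero {G₀ : Type*} [CommGroupWithZero G₀] {a b c d : G₀}
    (ha : a ≠ 0) (hd : d ≠ 0) (h : a / b = c / d) : c / a = d / b := by
  -- if `b = 0` then `c = 0`, and both sides vanish because `d / 0 = 0`
  rcases eq_or_ne b 0 with rfl | hb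
  · rw [div_zero, eq_comm, div_eq_zero_iff] at h
    simp [h.resolve_right hd]
  · exact div_eq_div_of_div_eq_div ha hb h.symm

theorem importance_weight_deterministic_classifier_general
    {𝒳 : Type*} [Fintype 𝒳] {K : ℕ}
    (p q : 𝒳 × Fin K → ℝ)
    (hp0 : ∀ z, 0 ≤ p z)
    (hqc : ∀ k, 0 < ∑ x, q (x, k))
    (hshare : ∀ x k, p (x, k) / (∑ x', p (x', k)) = q (x, k) / (∑ x', q (x', k)))
    (kstar : 𝒳 → Fin K)
    (hdet : ∀ x, p (x, kstar x) / (∑ k, p (x, k)) = 1) :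
    ∀ x, (∑ k, q (x, k)) / (∑ k, p (x, k)) =
      (∑ x', q (x', kstar x)) / (∑ x', p (x', kstar x)) := by
  intro x
  have hpx_ne : ∑ k, p (x, k) ≠ 0 := fun h0 => by simpa [h0] using hdet x
  have hp_kstar : p (x, kstar x) = ∑ k, p (x, k) := (div_eq_one_iff_eq hpx_ne).mp (hdet x)
  have hq_off : ∀ k ≠ kstar x, q (x, k) = 0 := fun k hk => by
    have h := hshare x k
    rw [apply_eq_zero_of_apply_eq_sum (fun k => hp0 (x, k)) hp_kstar hk, zero_div, eq_comm,
      div_eq_zero_iff] at h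
    exact h.resolve_right (hqc k).ne'
  have hq_kstar : ∑ k, q (x, k) = q (x, kstar x) :=
    sum_eq_single_of_mem _ (mem_univ _) fun k _ hk => hq_off k hk
  rw [hq_kstar, ← hp_kstar]
  exact div_eq_div_of_div_eq_div_of_ne_zero (hp_kstar ▸ hpx_ne) (hqc _).ne' (hshare x (kstar x))

/-- If the domain classifier is deterministic (`p(c = k*(x) | x) = 1` for all `x`),
then under Shared Support the importance weight reduces to `λ_{k*(x)}`. -/
theorem importance_weight_deterministic_classifier
    {𝒳 : Type*} [Fintype 𝒳] {K : ℕ} (hK : 0 < K)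
    (p q : 𝒳 × Fin K → ℝ)
    (hp0 : ∀ z, 0 ≤ p z) (hq0 : ∀ z, 0 ≤ q z)
    (hp1 : ∑ z, p z = 1) (hq1 : ∑ z, q z = 1)
    (hpx : ∀ x, 0 < ∑ k, p (x, k))
    (hpc : ∀ k, 0 < ∑ x, p (x, k))
    (hqc : ∀ k, 0 < ∑ x, q (x, k))
    (hshare : ∀ x k, p (x, k) / (∑ x', p (x', k)) = q (x, k) / (∑ x', q (x', k)))
    (kstar : 𝒳 → Fin K)
    (hdet : ∀ x, p (x, kstar x) / (∑ k, p (x, k)) = 1) :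
    ∀ x, (∑ k, q (x, k)) / (∑ k, p (x, k)) =
      (∑ x', q (x', kstar x)) / (∑ x', p (x', kstar x)) :=
  importance_weight_deterministic_classifier_general p q hp0 hqc hshare kstar hdet
end

section
/- Let 𝒳 be a finite type and K a positive integer, and let p, q : 𝒳 × Fin K → ℝ be joint distributions (nonnegative, summing to 1) with p(x) := Σ_k p(x,k) > 0 for every x and p(c=k) := Σ_x p(x,k) > 0 and q(c=k) := Σ_x q(x,k) > 0 for every k, satisfying the Shared Support condition p(x,k)/p(c=k) = q(x,k)/q(c=k) for all x, k. Suppose there is a map k* : 𝒳 → Fin K with p(c=k*(x)|x) = 1 for every x. Then for every loss function ℓ : 𝒳 → ℝ, the importance-weighted loss partitions by predicted domain: Σ_{x∈𝒳} (q(x)/p(x))·ℓ(x) = Σ_{k=1}^{K} Σ_{x∈𝒳 : k*(x)=k} λ_k·ℓ(x), where λ_k := q(c=k)/p(c=k). -/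
/-- With a deterministic domain classifier, the importance-weighted loss
partitions by predicted domain:
`∑_x (q(x)/p(x))·ℓ(x) = ∑_k ∑_{x : k*(x)=k} λ_k·ℓ(x)`. -/
theorem importance_weighted_loss_partitions
    {𝒳 : Type*} [Fintype 𝒳] [DecidableEq 𝒳] {K : ℕ} (hK : 0 < K)
    (p q : 𝒳 × Fin K → ℝ)
    (hp0 : ∀ z, 0 ≤ p z) (hq0 : ∀ z, 0 ≤ q z)
    (hp1 : ∑ z, p z = 1) (hq1 : ∑ z, q z = 1)
    (hpx : ∀ x, 0 < ∑ k, p (x, k))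
    (hpc : ∀ k, 0 < ∑ x, p (x, k))
    (hqc : ∀ k, 0 < ∑ x, q (x, k))
    (hshare : ∀ x k, p (x, k) / (∑ x', p (x', k)) = q (x, k) / (∑ x', q (x', k)))
    (kstar : 𝒳 → Fin K)
    (hdet : ∀ x, p (x, kstar x) / (∑ k, p (x, k)) = 1)
    (ℓ : 𝒳 → ℝ) :
    ∑ x, ((∑ k, q (x, k)) / (∑ k, p (x, k))) * ℓ x =
      ∑ k, ∑ x ∈ Finset.univ.filter (fun x => kstar x = k),
        ((∑ x', q (x', k)) / (∑ x', p (x', k))) * ℓ x := by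
  -- q(x,k) = p(x,k) * λ_k
  have hq_eq : ∀ x k, q (x, k) = p (x, k) * ((∑ x', q (x', k)) / (∑ x', p (x', k))) := by
    intro x k
    have h := hshare x k
    field_simp [(hpc k).ne', (hqc k).ne'] at h ⊢
    linarith [h]
  -- p(x,k) = 0 for k ≠ kstar x
  have hp_zero : ∀ x k, k ≠ kstar x → p (x, k) = 0 := by
    intro x k hk
    have hpx' := (hpx x).ne'
    have hps : p (x, kstar x) = ∑ k, p (x, k) := by
      have h := hdet x
      field_simp [hpx'] at h
      exact h
    have hsum : ∑ k ∈ Finset.univ.erase (kstar x), p (x, k) = 0 := by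
      have := Finset.add_sum_erase Finset.univ (fun k => p (x, k)) (Finset.mem_univ (kstar x))
      linarith [hps, this]
    have := Finset.sum_eq_zero_iff_of_nonneg (fun i _ => hp0 (x, i)) |>.mp hsum k
      (Finset.mem_erase.mpr ⟨hk, Finset.mem_univ k⟩)
    exact this
  -- rewrite RHS as a sum over x via fiberwise sum
  rw [show (∑ k, ∑ x ∈ Finset.univ.filter (fun x => kstar x = k),
        ((∑ x', q (x', k)) / (∑ x', p (x', k))) * ℓ x)
      = ∑ x, ((∑ x', q (x', kstar x)) / (∑ x', p (x', kstar x))) * ℓ x from by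
    rw [← Finset.sum_fiberwise (g := kstar)
      (f := fun x => ((∑ x', q (x', kstar x)) / (∑ x', p (x', kstar x))) * ℓ x)]
    refine Finset.sum_congr rfl fun k _ => Finset.sum_congr rfl fun x hx => ?_
    rw [(Finset.mem_filter.mp hx).2]]
  refine Finset.sum_congr rfl fun x _ => ?_
  congr 1
  have hqx : ∑ k, q (x, k) =
      (∑ k, p (x, k)) * ((∑ x', q (x', kstar x)) / (∑ x', p (x', kstar x))) := by
    have hps : p (x, kstar x) = ∑ k, p (x, k) := by
      have h := hdet x
      field_simp [(hpx x).ne'] at h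
      exact h
    calc ∑ k, q (x, k)
        = ∑ k, p (x, k) * ((∑ x', q (x', k)) / (∑ x', p (x', k))) := by
          exact Finset.sum_congr rfl fun k _ => hq_eq x k
      _ = p (x, kstar x) * ((∑ x', q (x', kstar x)) / (∑ x', p (x', kstar x))) := by
          refine Finset.sum_eq_single (kstar x) (fun k _ hk => ?_) (fun h => absurd (Finset.mem_univ _) h)
          rw [hp_zero x k hk, zero_mul]
      _ = _ := by rw [hps]
  rw [hqx, mul_comm, mul_div_assoc, div_self (hpx x).ne', mul_one]
end

section
/- Let 𝒳 be a finite type and K a positive integer, and let p, q : 𝒳 × Fin K → ℝ be joint distributions (nonnegative, summing to 1) with p(x) := Σ_k p(x,k) > 0 for every x and p(c=k) := Σ_x p(x,k) > 0 and q(c=k) := Σ_x q(x,k) > 0 for every k, satisfying the Shared Support condition p(x,k)/p(c=k) = q(x,k)/q(c=k) for all x, k. Then for every loss function ℓ : 𝒳 → ℝ, the q-expected loss can be computed by reweighting the p-expected loss with the decomposed importance weights: Σ_x q(x)·ℓ(x) = Σ_x p(x)·( Σ_{k=1}^{K} λ_k·p(c=k|x) )·ℓ(x), where λ_k := q(c=k)/p(c=k)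 and p(c=k|x) := p(x,k)/p(x). -/
/-- Importance sampling with the decomposed weights: under Shared Support, the
`q`-expected loss equals the `p`-expectation of the loss reweighted by
`∑ k, λ_k·p(c=k|x)`. -/
theorem expected_loss_via_decomposed_weights
    {𝒳 : Type*} [Fintype 𝒳] {K : ℕ} (hK : 0 < K)
    (p q : 𝒳 × Fin K → ℝ)
    (hp0 : ∀ z, 0 ≤ p z) (hq0 : ∀ z, 0 ≤ q z)
    (hp1 : ∑ z, p z = 1) (hq1 : ∑ z, q z = 1)
    (hpx : ∀ x, 0 < ∑ k, p (x, k))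
    (hpc : ∀ k, 0 < ∑ x, p (x, k))
    (hqc : ∀ k, 0 < ∑ x, q (x, k))
    (hshare : ∀ x k, p (x, k) / (∑ x', p (x', k)) = q (x, k) / (∑ x', q (x', k)))
    (ℓ : 𝒳 → ℝ) :
    ∑ x, (∑ k, q (x, k)) * ℓ x =
      ∑ x, (∑ k, p (x, k)) *
        (∑ k, ((∑ x', q (x', k)) / (∑ x', p (x', k))) * (p (x, k) / (∑ k', p (x, k')))) * ℓ x := by
  apply Finset.sum_congr rfl
  intro x _
  congr 1
  rw [Finset.mul_sum]
  apply Finset.sum_congr rfl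
  intro k _
  have hpcne := (hpc k).ne'
  have hqcne := (hqc k).ne'
  have hpxne := (hpx x).ne'
  have hq : q (x, k) = (∑ x', q (x', k)) / (∑ x', p (x', k)) * p (x, k) := by
    have h := hshare x k
    rw [div_eq_div_iff hpcne hqcne] at h
    field_simp
    linarith
  rw [hq]
  field_simp
end
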